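/- arXiv:2405.01184 — 5 statements merged into one kernel-verified Lean document; each statement's English description precedes it below -/
import Mathlib

section
/- For every complex number z with |z| < 1, the infinite product ∏_{n=1}^∞ (1 - z^n) satisfies |∏_{n=1}^∞ (1 - z^n)| ≤ 1 + |z| + 2|z|^4/(1 - |z|^2). -/
/-!
Euler's pentagonal number theorem writes the product as
`1 - z - z^2 + z^5 + z^7 - z^12 - z^15 + ⋯`. For `k ≥ 2` the `k`-th pair of terms has exponents
at least `2k + 3`, so the tail from `z^5` on is dominated by a geometric series in `‖z‖^2`; the
head `1 - z - z^2` is estimated directly, using only `Re z ≥ -‖z‖`.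
-/

open Finset

lemma le_pentagonal_neg (k : ℕ) : k ≤ pentagonal (-k) := by
  have h := two_mul_natCast_pentagonal_neg k
  zify
  nlinarith

lemma two_mul_add_three_le_pentagonal_neg {k : ℕ} (hk : 2 ≤ k) : 2 * k + 3 ≤ pentagonal (-k) := by
  have h := two_mul_natCast_pentagonal_neg k
  zify at hk ⊢
  nlinarith

lemma norm_neg_one_pow_mul {R : Type*} [SeminormedRing R] (k : ℕ) (y : R) :
    ‖(-1) ^ k * y‖ = ‖y‖ := by
  rcases neg_one_pow_eq_or R k with h | h <;> simp [h]

section Ring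

variable {R : Type*} [Ring R]

/-- Here `pentagonal (-k) = k(3k+1)/2` and `pentagonal (k + 1) = (k+1)(3k+2)/2`. -/
def pentagonalTerm (x : R) (k : ℕ) : R :=
  (-1) ^ k * (x ^ pentagonal (-k) - x ^ pentagonal (k + 1))

lemma pentagonalTerm_zero_add_pentagonalTerm_one (x : R) :
    pentagonalTerm x 0 + pentagonalTerm x 1 = 1 - x - x ^ 2 + x ^ 5 := by
  have h0 : pentagonal 0 = 0 := by decide
  have h1 : pentagonal 1 = 1 := by decide
  have h2 : pentagonal (-1) = 2 := by decide
  have h5 : pentagonal (1 + 1) = 5 := by decide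
  simp only [pentagonalTerm, Nat.cast_zero, neg_zero, zero_add, Nat.cast_one, pow_zero,
    pow_one, h0, h1, h2, h5, one_mul, neg_one_mul]
  abel

end Ring

variable {R : Type*} [NormedCommRing R] [NormOneClass R] {x : R}

lemma norm_pentagonalTerm_le (hx : ‖x‖ ≤ 1) (k : ℕ) :
    ‖pentagonalTerm x k‖ ≤ 2 * ‖x‖ ^ pentagonal (-k) := by
  have hle : ‖x‖ ^ pentagonal (k + 1) ≤ ‖x‖ ^ pentagonal (-k) :=
    pow_le_pow_of_le_one (norm_nonneg x) hx
      (pentagonal_neg_lt_pentagonal_add_one k.cast_nonneg).le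
  calc ‖pentagonalTerm x k‖ ≤ ‖x ^ pentagonal (-k)‖ + ‖x ^ pentagonal (k + 1)‖ := by
        rw [pentagonalTerm, norm_neg_one_pow_mul]
        exact norm_sub_le _ _
    _ ≤ ‖x‖ ^ pentagonal (-k) + ‖x‖ ^ pentagonal (k + 1) :=
        add_le_add (norm_pow_le _ _) (norm_pow_le _ _)
    _ ≤ 2 * ‖x‖ ^ pentagonal (-k) := by linarith

lemma norm_prod_one_sub_pow_le (hx : ‖x‖ < 1) (k : ℕ) (s : Finset ℕ) :
    ‖∏ i ∈ s, (1 - x ^ (k + i + 1))‖ ≤ Real.exp (1 - ‖x‖)⁻¹ := by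
  have hsum : ∑ i ∈ s, ‖-x ^ (k + i + 1)‖ ≤ (1 - ‖x‖)⁻¹ := calc
    ∑ i ∈ s, ‖-x ^ (k + i + 1)‖ ≤ ∑ i ∈ s, ‖x‖ ^ i := sum_le_sum fun i _ => by
        rw [norm_neg]
        exact (norm_pow_le _ _).trans (pow_le_pow_of_le_one (norm_nonneg _) hx.le (by omega))
    _ ≤ ∑' i, ‖x‖ ^ i :=
        (summable_geometric_of_lt_one (norm_nonneg _) hx).sum_le_tsum _ fun i _ => by positivity
    _ = (1 - ‖x‖)⁻¹ := tsum_geometric_of_lt_one (norm_nonneg _) hx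
  calc ‖∏ i ∈ s, (1 - x ^ (k + i + 1))‖ ≤ ‖∏ i ∈ s, (1 + -x ^ (k + i + 1)) - 1‖ + 1 := by
        simpa [sub_eq_add_neg] using norm_le_norm_sub_add (∏ i ∈ s, (1 - x ^ (k + i + 1))) 1
    _ ≤ Real.exp (∑ i ∈ s, ‖-x ^ (k + i + 1)‖) := by
        linarith [s.norm_prod_one_add_sub_one_le fun i => -x ^ (k + i + 1)]
    _ ≤ Real.exp (1 - ‖x‖)⁻¹ := Real.exp_le_exp.2 hsum

lemma norm_pow_mul_prod_one_sub_pow_le (hx : ‖x‖ < 1) (k n : ℕ) :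
    ‖x ^ ((k + 1) * n) * ∏ i ∈ range (n + 1), (1 - x ^ (k + i + 1))‖ ≤
      Real.exp (1 - ‖x‖)⁻¹ * ‖x‖ ^ n := by
  have hpow : ‖x ^ ((k + 1) * n)‖ ≤ ‖x‖ ^ n :=
    (norm_pow_le _ _).trans (pow_le_pow_of_le_one (norm_nonneg _) hx.le (by nlinarith))
  calc ‖x ^ ((k + 1) * n) * ∏ i ∈ range (n + 1), (1 - x ^ (k + i + 1))‖
      ≤ ‖x ^ ((k + 1) * n)‖ * ‖∏ i ∈ range (n + 1), (1 - x ^ (k + i + 1))‖ := norm_mul_le _ _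
    _ ≤ ‖x‖ ^ n * Real.exp (1 - ‖x‖)⁻¹ :=
        mul_le_mul hpow (norm_prod_one_sub_pow_le hx k _) (norm_nonneg _) (by positivity)
    _ = Real.exp (1 - ‖x‖)⁻¹ * ‖x‖ ^ n := mul_comm _ _

lemma norm_tsum_pow_mul_prod_one_sub_pow_le (hx : ‖x‖ < 1) (k : ℕ) :
    ‖∑' n, x ^ ((k + 1) * n) * ∏ i ∈ range (n + 1), (1 - x ^ (k + i + 1))‖ ≤
      Real.exp (1 - ‖x‖)⁻¹ * (1 - ‖x‖)⁻¹ :=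
  tsum_of_norm_bounded ((hasSum_geometric_of_lt_one (norm_nonneg x) hx).mul_left _)
    (norm_pow_mul_prod_one_sub_pow_le hx k)

variable [CompleteSpace R]

lemma summable_pow_mul_prod_one_sub_pow (hx : ‖x‖ < 1) (k : ℕ) :
    Summable fun n => x ^ ((k + 1) * n) * ∏ i ∈ range (n + 1), (1 - x ^ (k + i + 1)) :=
  .of_norm_bounded ((summable_geometric_of_lt_one (norm_nonneg x) hx).mul_left _)
    (norm_pow_mul_prod_one_sub_pow_le hx k)

lemma multipliable_one_sub_pow (hx : ‖x‖ < 1) (k : ℕ) :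
    Multipliable fun n => 1 - x ^ (n + k + 1) := by
  have hsum : Summable fun n => ‖-x ^ (n + k + 1)‖ :=
    .of_nonneg_of_le (fun _ => norm_nonneg _)
      (fun n => by
        rw [norm_neg]
        exact (norm_pow_le _ _).trans (pow_le_pow_of_le_one (norm_nonneg _) hx.le (by omega)))
      (summable_geometric_of_lt_one (norm_nonneg x) hx)
  simpa [sub_eq_add_neg] using multipliable_one_add_of_summable hsum

lemma summable_pentagonalTerm (hx : ‖x‖ < 1) : Summable (pentagonalTerm x) :=
  .of_norm_bounded ((summable_geometric_of_lt_one (norm_nonneg x) hx).mul_left 2) fun k =>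
    (norm_pentagonalTerm_le hx.le k).trans <| mul_le_mul_of_nonneg_left
      (pow_le_pow_of_le_one (norm_nonneg x) hx.le (le_pentagonal_neg k)) zero_le_two

theorem tprod_one_sub_pow_eq_tsum_pentagonalTerm (hx : ‖x‖ < 1) :
    ∏' n, (1 - x ^ (n + 1)) = ∑' k, pentagonalTerm x k := by
  refine Pentagonal.tprod_one_sub_pow (tendsto_pow_atTop_nhds_zero_of_norm_lt_one hx)
    (summable_pow_mul_prod_one_sub_pow hx) (multipliable_one_sub_pow hx)
    (summable_pentagonalTerm hx) ?_
  refine squeeze_zero_norm (a := fun k => ‖x‖ ^ k * (Real.exp (1 - ‖x‖)⁻¹ * (1 - ‖x‖)⁻¹))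
    (fun k => ?_) ?_
  · have he : k ≤ (k + 1) * (3 * k + 4) / 2 := (Nat.le_div_iff_mul_le two_pos).2 (by nlinarith)
    rw [mul_assoc, norm_neg_one_pow_mul]
    exact (norm_mul_le _ _).trans <| mul_le_mul
      ((norm_pow_le _ _).trans (pow_le_pow_of_le_one (norm_nonneg _) hx.le he))
      (norm_tsum_pow_mul_prod_one_sub_pow_le hx k) (norm_nonneg _) (by positivity)
  · simpa using (tendsto_pow_atTop_nhds_zero_of_lt_one (norm_nonneg x) hx).mul_const
      (Real.exp (1 - ‖x‖)⁻¹ * (1 - ‖x‖)⁻¹)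

lemma norm_tsum_pentagonalTerm_le (hx : ‖x‖ < 1) :
    ‖∑' k, pentagonalTerm x k‖ ≤ ‖1 - x - x ^ 2‖ + ‖x‖ ^ 5 + 2 * ‖x‖ ^ 7 / (1 - ‖x‖ ^ 2) := by
  have hx0 := norm_nonneg x
  have htail : ‖∑' k, pentagonalTerm x (k + 2)‖ ≤ 2 * ‖x‖ ^ 7 / (1 - ‖x‖ ^ 2) := by
    refine tsum_of_norm_bounded ((hasSum_geometric_of_lt_one (by positivity)
      (pow_lt_one₀ hx0 hx two_ne_zero)).mul_left (2 * ‖x‖ ^ 7)) fun k => ?_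
    calc ‖pentagonalTerm x (k + 2)‖ ≤ 2 * ‖x‖ ^ pentagonal (-(k + 2 : ℕ)) :=
          norm_pentagonalTerm_le hx.le _
      _ ≤ 2 * ‖x‖ ^ (2 * (k + 2) + 3) := mul_le_mul_of_nonneg_left
          (pow_le_pow_of_le_one hx0 hx.le (two_mul_add_three_le_pentagonal_neg (by omega)))
          zero_le_two
      _ = 2 * ‖x‖ ^ 7 * (‖x‖ ^ 2) ^ k := by ring
  rw [← (summable_pentagonalTerm hx).sum_add_tsum_nat_add 2, sum_range_succ, sum_range_one,
    pentagonalTerm_zero_add_pentagonalTerm_one, add_assoc]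
  calc ‖1 - x - x ^ 2 + (x ^ 5 + ∑' k, pentagonalTerm x (k + 2))‖
      ≤ ‖1 - x - x ^ 2‖ + (‖x ^ 5‖ + ‖∑' k, pentagonalTerm x (k + 2)‖) :=
        (norm_add_le _ _).trans (add_le_add le_rfl (norm_add_le _ _))
    _ ≤ ‖1 - x - x ^ 2‖ + ‖x‖ ^ 5 + 2 * ‖x‖ ^ 7 / (1 - ‖x‖ ^ 2) := by
        linarith [norm_pow_le x 5]

open Complex

lemma Complex.norm_one_sub_sub_sq_mul_le (z : ℂ) :
    ‖1 - z - z ^ 2‖ * (1 + ‖z‖) ≤ (1 + ‖z‖) ^ 2 + 2 * ‖z‖ ^ 4 := by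
  set r := ‖z‖
  have hr : 0 ≤ r := norm_nonneg z
  have hre : -r ≤ z.re := neg_le_of_abs_le (abs_re_le_norm z)
  have hr2 : r ^ 2 = z.re ^ 2 + z.im ^ 2 := by rw [Complex.sq_norm, normSq_apply]; ring
  have hw : ‖1 - z - z ^ 2‖ ^ 2
      = 1 + 3 * r ^ 2 + r ^ 4 - 2 * z.re - 4 * z.re ^ 2 + 2 * r ^ 2 * z.re := by
    rw [Complex.sq_norm, normSq_apply, show r ^ 4 = (r ^ 2) ^ 2 by ring, hr2]
    simp only [sub_re, sub_im, one_re, one_im, pow_two, mul_re, mul_im]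
    ring
  -- `hquad` is `(1 + r)^2 + 4 r^4 - ‖1 - z - z^2‖^2`, a quadratic in `Re z` that is nonnegative
  -- for `Re z ≥ -r`.
  have hquad : 0 ≤ 4 * z.re ^ 2 + 2 * z.re * (1 - r ^ 2) + 2 * r - 2 * r ^ 2 + 3 * r ^ 4 := by
    rcases le_total 0 (1 - 4 * r - r ^ 2) with h | h
    · nlinarith [mul_nonneg (show 0 ≤ z.re + r by linarith) h, sq_nonneg (z.re + r)]
    · nlinarith [sq_nonneg (2 * z.re + (1 - r ^ 2) / 2), sq_nonneg r,
        mul_nonneg hr (sq_nonneg r)]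
  refine (pow_le_pow_iff_left₀ (by positivity) (by positivity) two_ne_zero).1 ?_
  rw [mul_pow, hw]
  nlinarith [mul_nonneg (sq_nonneg (1 + r)) hquad, pow_nonneg hr 8]

theorem pentagonal_product_upper_bound (z : ℂ) (hz : ‖z‖ < 1) :
    ‖∏' n : ℕ, (1 - z ^ (n + 1))‖ ≤ 1 + ‖z‖ + 2 * ‖z‖ ^ 4 / (1 - ‖z‖ ^ 2) := by
  set r := ‖z‖
  have hr : 0 ≤ r := norm_nonneg z
  have hr2 : 0 < 1 - r ^ 2 := by nlinarith
  have hw := norm_one_sub_sub_sq_mul_le z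
  have hcleared : (‖1 - z - z ^ 2‖ + r ^ 5) * (1 - r ^ 2) + 2 * r ^ 7
      ≤ (1 + r) * (1 - r ^ 2) + 2 * r ^ 4 := by
    nlinarith [mul_le_mul_of_nonneg_right hw (sub_nonneg.2 hz.le), pow_nonneg hr 5]
  calc ‖∏' n : ℕ, (1 - z ^ (n + 1))‖ = ‖∑' k, pentagonalTerm z k‖ := by
        rw [tprod_one_sub_pow_eq_tsum_pentagonalTerm hz]
    _ ≤ ‖1 - z - z ^ 2‖ + r ^ 5 + 2 * r ^ 7 / (1 - r ^ 2) :=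
        norm_tsum_pentagonalTerm_le hz
    _ = ((‖1 - z - z ^ 2‖ + r ^ 5) * (1 - r ^ 2) + 2 * r ^ 7) / (1 - r ^ 2) := by field_simp
    _ ≤ ((1 + r) * (1 - r ^ 2) + 2 * r ^ 4) / (1 - r ^ 2) := by gcongr
    _ = 1 + r + 2 * r ^ 4 / (1 - r ^ 2) := by field_simp
end

section
/- For every real number z with 0 < z < 1, the infinite product ∏_{n=1}^∞ (1 - z^n) satisfies ∏_{n=1}^∞ (1 - z^n) ≥ 1 - z - z^2 - 2z^2/(1 - z). -/
/-!
Since `(1 - a) (1 - b) ≥ 1 - a - b` for `a, b ∈ [0, 1]`, a product `∏ (1 - aᵢ)` with `aᵢ ∈ [0, 1]`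
is at least `1 - ∑ aᵢ`. For `aₙ = zⁿ⁺¹` this gives `∏ (1 - zⁿ⁺¹) ≥ 1 - z / (1 - z)`, and
`z / (1 - z) = z + z² / (1 - z) ≤ z + z² + 2 z² / (1 - z)`.
-/

theorem Finset.one_sub_sum_le_prod_one_sub {ι R : Type*} [CommRing R] [LinearOrder R]
    [IsStrictOrderedRing R] (s : Finset ι) {f : ι → R} (h0 : ∀ i ∈ s, 0 ≤ f i)
    (h1 : ∀ i ∈ s, f i ≤ 1) : 1 - ∑ i ∈ s, f i ≤ ∏ i ∈ s, (1 - f i) := by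
  classical
  induction s using Finset.induction_on with
  | empty => simp
  | insert j s hj ih =>
    rw [Finset.sum_insert hj, Finset.prod_insert hj]
    have hfj : 0 ≤ f j := h0 j (Finset.mem_insert_self j s)
    have hfj1 : 0 ≤ 1 - f j := sub_nonneg.mpr (h1 j (Finset.mem_insert_self j s))
    have hsum : 0 ≤ ∑ i ∈ s, f i :=
      Finset.sum_nonneg fun i hi => h0 i (Finset.mem_insert_of_mem hi)
    have ih' := ih (fun i hi => h0 i (Finset.mem_insert_of_mem hi))
      (fun i hi => h1 i (Finset.mem_insert_of_mem hi))
    calc 1 - (f j + ∑ i ∈ s, f i) ≤ (1 - f j) * (1 - ∑ i ∈ s, f i) := by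
          nlinarith [mul_nonneg hfj hsum]
      _ ≤ (1 - f j) * ∏ i ∈ s, (1 - f i) := mul_le_mul_of_nonneg_left ih' hfj1

theorem Real.one_sub_tsum_le_tprod_one_sub {ι : Type*} {f : ι → ℝ} (hf : Summable f)
    (h0 : ∀ i, 0 ≤ f i) (h1 : ∀ i, f i ≤ 1) : 1 - ∑' i, f i ≤ ∏' i, (1 - f i) := by
  have hmul : Multipliable fun i => 1 - f i := by
    simpa only [sub_eq_add_neg] using Real.multipliable_one_add_of_summable hf.neg
  refine ge_of_tendsto' hmul.hasProd fun s => ?_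
  calc 1 - ∑' i, f i ≤ 1 - ∑ i ∈ s, f i := by
        gcongr
        exact hf.sum_le_tsum s fun i _ => h0 i
    _ ≤ ∏ i ∈ s, (1 - f i) :=
        s.one_sub_sum_le_prod_one_sub (fun i _ => h0 i) fun i _ => h1 i

theorem hasSum_pow_succ_of_lt_one {z : ℝ} (h0 : 0 ≤ z) (h1 : z < 1) :
    HasSum (fun n : ℕ => z ^ (n + 1)) (z / (1 - z)) := by
  simpa only [pow_succ', div_eq_mul_inv] using (hasSum_geometric_of_lt_one h0 h1).mul_left z

theorem pentagonal_product_lower_bound (z : ℝ) (h0 : 0 < z) (h1 : z < 1) :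
    1 - z - z ^ 2 - 2 * z ^ 2 / (1 - z) ≤ ∏' n : ℕ, (1 - z ^ (n + 1)) := by
  have hgeom := hasSum_pow_succ_of_lt_one h0.le h1
  have hprod : 1 - z / (1 - z) ≤ ∏' n : ℕ, (1 - z ^ (n + 1)) := by
    rw [← hgeom.tsum_eq]
    exact Real.one_sub_tsum_le_tprod_one_sub hgeom.summable (fun n => by positivity)
      fun n => pow_le_one₀ h0.le h1.le
  have hz : 0 < 1 - z := sub_pos.mpr h1
  have hsplit : z / (1 - z) = z + z ^ 2 / (1 - z) := by
    field_simp
    ring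
  have hquot : 0 ≤ z ^ 2 / (1 - z) := by positivity
  calc 1 - z - z ^ 2 - 2 * z ^ 2 / (1 - z) ≤ 1 - (z + z ^ 2 / (1 - z)) := by
        rw [mul_div_assoc]
        linarith [sq_nonneg z]
    _ = 1 - z / (1 - z) := by rw [hsplit]
    _ ≤ ∏' n : ℕ, (1 - z ^ (n + 1)) := hprod
end

section
/- Let z = e^{iθ} with θ ∈ [π/2, 2π/3], and let γ = (a b; c d) ∈ PSL₂(ℤ) with |cd| ≥ 2. Then Im(γ.z) ≤ 2/5, where γ.z = (az+b)/(cz+d). -/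
/-!
Write `z = e^{iθ}`. For real `a, b, c, d` the imaginary part of `(az + b)/(cz + d)` is
`(ad - bc) Im z / |cz + d|²`, so with `ad - bc = 1` and `Im z ≤ 1` it suffices to bound the
denominator below by `5/2`. Since `|z| = 1`, `|cz + d|² = c² + d² + 2cd Re z`, and `|Re z| ≤ 1/2`
gives `|cz + d|² ≥ (c² + d²)/2`; finally `|cd| ≥ 2` forces `c² + d² ≥ 5` for integers.
-/

open Complex Real

lemma Int.five_le_sq_add_sq_of_two_le_abs_mul {c d : ℤ} (hcd : 2 ≤ |c * d|) :
    5 ≤ c ^ 2 + d ^ 2 := by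
  have hcd0 : c * d ≠ 0 := by rintro h; simp [h] at hcd
  have hc := Int.one_le_abs (left_ne_zero_of_mul hcd0)
  have hd := Int.one_le_abs (right_ne_zero_of_mul hcd0)
  rw [abs_mul] at hcd
  rw [← sq_abs c, ← sq_abs d]
  rcases (show |c| = 1 ∨ 2 ≤ |c| by omega) with hc1 | hc2
  · rw [hc1] at hcd ⊢
    nlinarith
  · nlinarith

lemma Complex.im_div_linear (a b c d : ℝ) (z : ℂ) :
    ((a * z + b) / (c * z + d)).im = (a * d - b * c) * z.im / normSq (c * z + d) := by
  simp only [div_im, add_re, add_im, mul_re, mul_im, ofReal_re, ofReal_im]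
  ring

lemma Complex.sq_add_sq_div_two_le_normSq {z : ℂ} (hz : normSq z = 1) (hre : |z.re| ≤ 1 / 2)
    (c d : ℝ) : (c ^ 2 + d ^ 2) / 2 ≤ normSq (c * z + d) := by
  have hnormSq : normSq (c * z + d) = c ^ 2 + d ^ 2 + 2 * c * d * z.re := by
    rw [normSq_apply] at hz ⊢
    simp only [add_re, add_im, mul_re, mul_im, ofReal_re, ofReal_im]
    linear_combination c ^ 2 * hz
  have hcross : |2 * c * d * z.re| ≤ (c ^ 2 + d ^ 2) / 2 := by
    rw [abs_mul, abs_mul, abs_mul, abs_two, ← sq_abs c, ← sq_abs d]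
    nlinarith [abs_nonneg z.re, sq_nonneg (|c| - |d|), mul_nonneg (abs_nonneg c) (abs_nonneg d)]
  rw [hnormSq]
  linarith [neg_abs_le (2 * c * d * z.re)]

lemma Real.abs_cos_le_half_of_mem_Icc {θ : ℝ} (hθ : θ ∈ Set.Icc (π / 3) (2 * π / 3)) :
    |cos θ| ≤ 1 / 2 := by
  obtain ⟨hθ₁, hθ₂⟩ := hθ
  have hlo : cos (2 * π / 3) ≤ cos θ :=
    cos_le_cos_of_nonneg_of_le_pi (by linarith [pi_pos]) (by linarith [pi_pos]) hθ₂
  have hhi : cos θ ≤ cos (π / 3) :=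
    cos_le_cos_of_nonneg_of_le_pi (by linarith [pi_pos]) (by linarith [pi_pos]) hθ₁
  rw [show 2 * π / 3 = π - π / 3 by ring, cos_pi_sub, cos_pi_div_three] at hlo
  rw [cos_pi_div_three] at hhi
  exact abs_le.2 ⟨hlo, hhi⟩

/-- If `γ = (a b; c d) ∈ PSL₂(ℤ)` with `|cd| ≥ 2` and `z = e^{iθ}` with
`θ ∈ [π/2, 2π/3]`, then `Im(γ.z) ≤ 2/5`. -/
theorem im_smul_le (a b c d : ℤ) (hdet : a * d - b * c = 1) (hcd : 2 ≤ |c * d|)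
    (θ : ℝ) (hθ : θ ∈ Set.Icc (π / 2) (2 * π / 3)) :
    (((a : ℂ) * Complex.exp (I * θ) + b) / ((c : ℂ) * Complex.exp (I * θ) + d)).im ≤ 2 / 5 := by
  rw [mul_comm I]
  set z := exp (θ * I)
  have hz : normSq z = 1 := by rw [normSq_eq_norm_sq, norm_exp_ofReal_mul_I, one_pow]
  have hre : |z.re| ≤ 1 / 2 := by
    rw [exp_ofReal_mul_I_re]
    exact abs_cos_le_half_of_mem_Icc ⟨by linarith [hθ.1, pi_pos], hθ.2⟩
  have him : z.im ≤ 1 := by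
    rw [exp_ofReal_mul_I_im]
    exact sin_le_one θ
  have hden : (5 : ℝ) / 2 ≤ normSq (c * z + d) := by
    have h5 : (5 : ℝ) ≤ (c : ℝ) ^ 2 + (d : ℝ) ^ 2 := by
      exact_mod_cast Int.five_le_sq_add_sq_of_two_le_abs_mul hcd
    have := sq_add_sq_div_two_le_normSq hz hre c d
    push_cast at this
    linarith
  have hmobius := im_div_linear a b c d z
  push_cast at hmobius
  rw [hmobius, show (a : ℝ) * d - b * c = 1 by exact_mod_cast hdet, one_mul,
    div_le_iff₀ (by linarith)]
  linarith
end

section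
/- Fix integers m ≥ 1 and even k with k ≥ 8πm/√3. Then the function θ ↦ e^{πm(2 sinθ - tan(θ/2))} / (2 cos(θ/2))^k is nondecreasing on [π/2, 2π/3], and hence is at most its value at θ = 2π/3, which equals e^{πm(√3 - √3)} / 1^k = 1. In particular e^{πm(2 sinθ - tan(θ/2))}/(2cos(θ/2))^k ≤ 1 for all θ ∈ [π/2, 2π/3]. -/
/-!
Take logarithms. With `x = cos θ`, and using `2 cos² (θ/2) = 1 + cos θ`, the derivative of
`πm (2 sin θ - tan (θ/2)) - k log (2 cos (θ/2))` is
`(πm (2x² + 2x - 1) + (k/2) sin θ) / (1 + cos θ)`.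
Since `2x² + 2x - 1 ≥ -3/2` and `sin θ ≥ √3/2` on `[π/2, 2π/3]`, the numerator is at least
`√3 k / 4 - 3πm / 2 ≥ 0`. At `θ = 2π/3` we have `2 sin θ = tan (θ/2) = √3` and `2 cos (θ/2) = 1`,
so the logarithm vanishes there.
-/

open Real Set

noncomputable def residueExponent (a b θ : ℝ) : ℝ :=
  a * (2 * sin θ - tan (θ / 2)) - b * log (2 * cos (θ / 2))

lemma one_add_cos_eq_two_mul_cos_half_sq (θ : ℝ) : 1 + cos θ = 2 * cos (θ / 2) ^ 2 := by
  rw [cos_sq (θ / 2), mul_div_cancel₀ θ two_ne_zero]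
  ring

lemma hasDerivAt_tan_half {θ : ℝ} (hc : cos (θ / 2) ≠ 0) :
    HasDerivAt (fun x => tan (x / 2)) (1 / (1 + cos θ)) θ := by
  refine ((hasDerivAt_tan hc).comp θ ((hasDerivAt_id' θ).div_const 2)).congr_deriv ?_
  rw [one_add_cos_eq_two_mul_cos_half_sq]
  field_simp

lemma hasDerivAt_log_two_mul_cos_half {θ : ℝ} (hc : cos (θ / 2) ≠ 0) :
    HasDerivAt (fun x => log (2 * cos (x / 2))) (-sin θ / (2 * (1 + cos θ))) θ := by
  have hsin : sin θ = 2 * sin (θ / 2) * cos (θ / 2) := by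
    rw [← sin_two_mul, mul_div_cancel₀ θ two_ne_zero]
  refine ((((hasDerivAt_id' θ).div_const 2).cos.const_mul 2).log
    (mul_ne_zero two_ne_zero hc)).congr_deriv ?_
  rw [one_add_cos_eq_two_mul_cos_half_sq, hsin]
  field_simp

lemma hasDerivAt_residueExponent (a b : ℝ) {θ : ℝ} (hc : cos (θ / 2) ≠ 0) :
    HasDerivAt (residueExponent a b)
      ((a * (2 * cos θ ^ 2 + 2 * cos θ - 1) + b * sin θ / 2) / (1 + cos θ)) θ := by
  have hpos : 1 + cos θ ≠ 0 := by
    rw [one_add_cos_eq_two_mul_cos_half_sq]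
    positivity
  refine (((((hasDerivAt_sin θ).const_mul 2).sub (hasDerivAt_tan_half hc)).const_mul a).sub
    ((hasDerivAt_log_two_mul_cos_half hc).const_mul b)).congr_deriv ?_
  field_simp
  ring

lemma sqrt_three_div_two_le_sin {θ : ℝ} (hθ : θ ∈ Icc (π / 2) (2 * π / 3)) :
    √3 / 2 ≤ sin θ := by
  rw [← sin_pi_div_three, ← sin_pi_sub θ]
  exact sin_le_sin_of_le_of_le_pi_div_two (by linarith [pi_pos]) (by linarith [hθ.1])
    (by linarith [hθ.2])

lemma cos_half_pos {θ : ℝ} (hθ : θ ∈ Icc (π / 2) (2 * π / 3)) : 0 < cos (θ / 2) :=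
  cos_pos_of_mem_Ioo ⟨by linarith [pi_pos, hθ.1], by linarith [pi_pos, hθ.2]⟩

lemma residueExponent_deriv_numerator_nonneg {a b θ : ℝ} (ha : 0 ≤ a) (hab : 8 * a ≤ √3 * b)
    (hsin : √3 / 2 ≤ sin θ) : 0 ≤ a * (2 * cos θ ^ 2 + 2 * cos θ - 1) + b * sin θ / 2 := by
  have hb : 0 ≤ b := by
    by_contra! hb
    linarith [mul_neg_of_pos_of_neg (sqrt_pos.mpr three_pos) hb]
  have hquad : -(3 / 2) ≤ 2 * cos θ ^ 2 + 2 * cos θ - 1 := by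
    nlinarith [sq_nonneg (2 * cos θ + 1)]
  nlinarith [mul_le_mul_of_nonneg_left hquad ha, mul_le_mul_of_nonneg_left hsin hb]

lemma monotoneOn_residueExponent {a b : ℝ} (ha : 0 ≤ a) (hab : 8 * a ≤ √3 * b) :
    MonotoneOn (residueExponent a b) (Icc (π / 2) (2 * π / 3)) := by
  have hderiv := fun θ (hθ : θ ∈ Icc (π / 2) (2 * π / 3)) =>
    hasDerivAt_residueExponent a b (cos_half_pos hθ).ne'
  refine monotoneOn_of_hasDerivWithinAt_nonneg (convex_Icc _ _)
    (fun θ hθ => (hderiv θ hθ).continuousAt.continuousWithinAt)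
    (fun θ hθ => (hderiv θ (interior_subset hθ)).hasDerivWithinAt) fun θ hθ => ?_
  have hθ' := interior_subset hθ
  have hden : 0 < 1 + cos θ := by
    rw [one_add_cos_eq_two_mul_cos_half_sq]
    exact mul_pos two_pos (pow_pos (cos_half_pos hθ') 2)
  exact div_nonneg
    (residueExponent_deriv_numerator_nonneg ha hab (sqrt_three_div_two_le_sin hθ')) hden.le

lemma exp_residueExponent (a : ℝ) (n : ℕ) {θ : ℝ} (hc : 0 < cos (θ / 2)) :
    exp (residueExponent a n θ) = exp (a * (2 * sin θ - tan (θ / 2))) / (2 * cos (θ / 2)) ^ n := by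
  rw [residueExponent, exp_sub, exp_nat_mul, exp_log (by positivity)]

lemma residueExponent_two_pi_div_three (a b : ℝ) : residueExponent a b (2 * π / 3) = 0 := by
  have hsin : sin (2 * π / 3) = √3 / 2 := by
    rw [show 2 * π / 3 = π - π / 3 by ring, sin_pi_sub, sin_pi_div_three]
  rw [residueExponent, show 2 * π / 3 / 2 = π / 3 by ring, hsin, tan_pi_div_three,
    cos_pi_div_three, show 2 * (√3 / 2) - √3 = 0 by ring]
  norm_num

theorem residue_term_monotone_and_le_one_general (m k : ℕ)
    (hbig : 8 * π * m / Real.sqrt 3 ≤ (k : ℝ)) :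
    MonotoneOn
      (fun θ : ℝ =>
        Real.exp (π * m * (2 * Real.sin θ - Real.tan (θ / 2))) /
          (2 * Real.cos (θ / 2)) ^ k)
      (Set.Icc (π / 2) (2 * π / 3)) ∧
    ∀ θ ∈ Set.Icc (π / 2) (2 * π / 3),
      Real.exp (π * m * (2 * Real.sin θ - Real.tan (θ / 2))) /
        (2 * Real.cos (θ / 2)) ^ k ≤ 1 := by
  have hab : 8 * (π * m) ≤ √3 * k := by
    rw [div_le_iff₀ (by positivity)] at hbig
    linarith
  have hmono := monotoneOn_residueExponent (by positivity) hab
  have hterm : EqOn (fun θ => exp (residueExponent (π * m) k θ))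
      (fun θ => exp (π * m * (2 * sin θ - tan (θ / 2))) / (2 * cos (θ / 2)) ^ k)
      (Icc (π / 2) (2 * π / 3)) :=
    fun θ hθ => exp_residueExponent _ k (cos_half_pos hθ)
  refine ⟨(exp_monotone.comp_monotoneOn hmono).congr hterm, fun θ hθ => ?_⟩
  have hright : 2 * π / 3 ∈ Icc (π / 2) (2 * π / 3) := right_mem_Icc.mpr (by linarith [pi_pos])
  rw [← exp_residueExponent _ k (cos_half_pos hθ), exp_le_one_iff, ← residueExponent_two_pi_div_three (π * m) k]
  exact hmono hθ hright hθ.2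

theorem residue_term_monotone_and_le_one (m k : ℕ) (hm : 1 ≤ m) (hk : Even k)
    (hbig : 8 * π * m / Real.sqrt 3 ≤ (k : ℝ)) :
    MonotoneOn
      (fun θ : ℝ =>
        Real.exp (π * m * (2 * Real.sin θ - Real.tan (θ / 2))) /
          (2 * Real.cos (θ / 2)) ^ k)
      (Set.Icc (π / 2) (2 * π / 3)) ∧
    ∀ θ ∈ Set.Icc (π / 2) (2 * π / 3),
      Real.exp (π * m * (2 * Real.sin θ - Real.tan (θ / 2))) /
        (2 * Real.cos (θ / 2)) ^ k ≤ 1 :=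
  residue_term_monotone_and_le_one_general m k hbig
end

section
/- Let c(n) be the Fourier coefficients of the modular j-function, satisfying 1 ≤ c(n) ≤ e^{4π√n}/(√2 n^{3/4}) for n ≥ 1, and for a > 0 and integer M ≥ 1 define f_{M,a}(x) = ∑_{n=-1}^{M} c(n) e^{-2πan} e^{2πinx} (with c(-1)=1, c(0)=744). Then for every a > 0, every integer M > 1/a², and every real x: |j(x + ai) - f_{M,a}(x)| < e^{2π(1/a - a(√M - 1/a)²)} √M / (2√2 π (M+1)^{3/4} (a√M - 1)). -/
/-!
The error is the tail `∑_{n > M} c(n) qⁿ` with `‖q‖ = e^{-2πa}`. By the coefficient bound its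
`n`-th term is at most `e^{2π(2√n - an)} / (√2 n^{3/4})`. The exponent is concave in `n`, so it lies
below its tangent line at `M`, whose slope is `-t` with `t = 2π(a - 1/√M)`, positive exactly when
`M > 1/a²`. Hence the `(M + 1 + k)`-th term is at most `B e^{-t(k+1)}` with
`B = e^{2π(2√M - aM)} / (√2 (M+1)^{3/4})`, and the tail is at most `B / (eᵗ - 1) < B / t`, which
is the stated bound because `2√M - aM = 1/a - a(√M - 1/a)²`.
-/

open Complex Real

theorem Real.sqrt_add_le_add_div {y : ℝ} (hy : 0 < y) {k : ℝ} (hk : 0 ≤ k) :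
    √(y + k) ≤ √y + k / (2 * √y) := by
  have hs : 0 < √y := Real.sqrt_pos.2 hy
  rw [Real.sqrt_le_left (by positivity)]
  have hexpand : (√y + k / (2 * √y)) ^ 2 = y + k + (k / (2 * √y)) ^ 2 := by
    field_simp
    rw [Real.sq_sqrt hy.le]
    ring
  rw [hexpand]
  exact le_add_of_nonneg_right (sq_nonneg _)

theorem two_mul_sqrt_sub_mul_add_le (a : ℝ) {y : ℝ} (hy : 0 < y) {k : ℝ} (hk : 0 ≤ k) :
    2 * √(y + k) - a * (y + k) ≤ 2 * √y - a * y - k * (a - 1 / √y) := by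
  have hs : 0 < √y := Real.sqrt_pos.2 hy
  have : 2 * (k / (2 * √y)) = k * (1 / √y) := by field_simp
  linarith [Real.sqrt_add_le_add_div hy hk]

theorem one_lt_mul_sqrt_of_one_div_sq_lt {a y : ℝ} (ha : 0 < a) (h : 1 / a ^ 2 < y) :
    1 < a * √y := by
  have : 1 / a < √y := by
    rw [Real.lt_sqrt (by positivity), div_pow, one_pow]
    exact h
  rwa [div_lt_iff₀ ha, mul_comm] at this

theorem two_mul_sqrt_sub_mul_eq {a y : ℝ} (ha : a ≠ 0) (hy : 0 ≤ y) :
    2 * √y - a * y = 1 / a - a * (√y - 1 / a) ^ 2 := by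
  field_simp
  linear_combination a ^ 2 * Real.sq_sqrt hy

theorem norm_tsum_sub_sum_range_le {E : Type*} [NormedAddCommGroup E] [CompleteSpace E]
    {f : ℕ → E} {g : ℕ → ℝ} {s : ℝ} (hg : HasSum g s) (M : ℕ)
    (hfg : ∀ k, ‖f (k + M)‖ ≤ g k) :
    ‖∑' n, f n - ∑ n ∈ Finset.range M, f n‖ ≤ s := by
  have hf : Summable f := (summable_nat_add_iff M).1 (hg.summable.of_norm_bounded hfg)
  rw [← hf.sum_add_tsum_nat_add M, add_sub_cancel_left]
  exact tsum_of_norm_bounded hg hfg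

theorem Real.hasSum_exp_neg_pow_succ {t : ℝ} (ht : 0 < t) :
    HasSum (fun k : ℕ => Real.exp (-t) ^ (k + 1)) (Real.exp t - 1)⁻¹ := by
  have hlt : Real.exp (-t) < 1 := Real.exp_lt_one_iff.2 (neg_neg_iff_pos.2 ht)
  have hne : Real.exp t - 1 ≠ 0 := (sub_pos.2 (Real.one_lt_exp_iff.2 ht)).ne'
  have hsum := (hasSum_geometric_of_lt_one (Real.exp_pos _).le hlt).mul_left (Real.exp (-t))
  rw [show Real.exp (-t) * (1 - Real.exp (-t))⁻¹ = (Real.exp t - 1)⁻¹ by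
    rw [Real.exp_neg]; field_simp] at hsum
  simpa only [pow_succ', mul_comm] using hsum

theorem coeff_mul_exp_pow_le {c : ℕ → ℝ}
    (hc : ∀ n : ℕ, 1 ≤ n →
      c n ≤ Real.exp (4 * π * √n) / (√2 * (n : ℝ) ^ ((3 : ℝ) / 4)))
    (a : ℝ) {M : ℕ} (hM : 0 < M) (k : ℕ) :
    c (k + M + 1) * Real.exp (-(2 * π * a)) ^ (k + M + 1) ≤
      Real.exp (2 * π * (2 * √M - a * M)) / (√2 * ((M : ℝ) + 1) ^ ((3 : ℝ) / 4)) *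
        Real.exp (-(2 * π * (a - 1 / √M))) ^ (k + 1) := by
  have hm : ((k + M + 1 : ℕ) : ℝ) = M + ((k : ℝ) + 1) := by push_cast; ring
  have hexponent := two_mul_sqrt_sub_mul_add_le a (Nat.cast_pos.2 hM) (k.cast_add_one_pos.le)
  rw [← hm] at hexponent
  calc c (k + M + 1) * Real.exp (-(2 * π * a)) ^ (k + M + 1)
      ≤ Real.exp (4 * π * √(k + M + 1 : ℕ)) /
          (√2 * ((k + M + 1 : ℕ) : ℝ) ^ ((3 : ℝ) / 4)) * Real.exp (-(2 * π * a)) ^ (k + M + 1) :=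
        mul_le_mul_of_nonneg_right (hc _ (by omega)) (by positivity)
    _ = Real.exp (2 * π * (2 * √(k + M + 1 : ℕ) - a * (k + M + 1 : ℕ))) /
          (√2 * ((k + M + 1 : ℕ) : ℝ) ^ ((3 : ℝ) / 4)) := by
        rw [← Real.exp_nat_mul, div_mul_eq_mul_div, ← Real.exp_add]
        ring_nf
    _ ≤ Real.exp (2 * π * (2 * √M - a * M - ((k : ℝ) + 1) * (a - 1 / √M))) /
          (√2 * ((M : ℝ) + 1) ^ ((3 : ℝ) / 4)) := by
        gcongr
        rw [hm]
        linarith [k.cast_nonneg (α := ℝ)]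
    _ = _ := by
        rw [← Real.exp_nat_mul, div_mul_eq_mul_div, ← Real.exp_add]
        push_cast
        ring_nf

section UpperHalfPlanePoint

variable (x a : ℝ)

theorem norm_exp_two_pi_I_mul_add_mul_I :
    ‖Complex.exp (2 * π * I * ((x : ℂ) + a * I))‖ = Real.exp (-(2 * π * a)) := by
  simp [Complex.norm_exp]

theorem exp_neg_two_pi_I_mul_add_mul_I :
    Complex.exp (-(2 * π * I * ((x : ℂ) + a * I))) =
      Complex.exp (2 * π * a) * Complex.exp (-(2 * π * I * x)) := by
  rw [← Complex.exp_add]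
  congr 1
  linear_combination (-(2 * π * a : ℂ)) * I_sq

theorem exp_two_pi_I_mul_add_mul_I_pow (n : ℕ) :
    Complex.exp (2 * π * I * ((x : ℂ) + a * I)) ^ n =
      Complex.exp (-(2 * π * a * n)) * Complex.exp (2 * π * I * n * x) := by
  rw [← Complex.exp_add, ← Complex.exp_nat_mul]
  congr 1
  linear_combination (2 * π * a * n : ℂ) * I_sq

end UpperHalfPlanePoint

theorem j_trig_poly_approx_general (c : ℕ → ℝ)
    (hc1 : ∀ n : ℕ, 1 ≤ n → 1 ≤ c n)
    (hc2 : ∀ n : ℕ, 1 ≤ n →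
      c n ≤ Real.exp (4 * π * Real.sqrt n) / (Real.sqrt 2 * (n : ℝ) ^ ((3 : ℝ) / 4)))
    (J : ℂ → ℂ)
    (hJ : ∀ τ : ℂ, 0 < τ.im → J τ = Complex.exp (-(2 * π * I * τ)) + 744 +
      ∑' n : ℕ, (c (n + 1) : ℂ) * Complex.exp (2 * π * I * τ) ^ (n + 1))
    (a : ℝ) (ha : 0 < a) (M : ℕ) (hM : 1 / a ^ 2 < (M : ℝ)) (x : ℝ) :
    ‖J ((x : ℂ) + a * I) -
        (Complex.exp (2 * π * a) * Complex.exp (-(2 * π * I * x)) + 744 +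
          ∑ n ∈ Finset.range M, (c (n + 1) : ℂ) * Complex.exp (-(2 * π * a * (n + 1))) *
            Complex.exp (2 * π * I * (n + 1) * x))‖ <
      Real.exp (2 * π * (1 / a - a * (Real.sqrt M - 1 / a) ^ 2)) /
          (2 * Real.sqrt 2 * π * ((M : ℝ) + 1) ^ ((3 : ℝ) / 4)) *
        (Real.sqrt M / (a * Real.sqrt M - 1)) := by
  have hM0 : 0 < M := by exact_mod_cast (by positivity : (0 : ℝ) < 1 / a ^ 2).trans hM
  have haM : 1 < a * √M := one_lt_mul_sqrt_of_one_div_sq_lt ha hM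
  set t := 2 * π * (a - 1 / √M)
  have ht : 0 < t := by
    have : 1 / √M < a := by rw [div_lt_iff₀ (by positivity)]; linarith
    unfold t; nlinarith [Real.pi_pos]
  have hterm (n : ℕ) : (c (n + 1) : ℂ) * Complex.exp (-(2 * π * a * (n + 1))) *
      Complex.exp (2 * π * I * (n + 1) * x) =
        c (n + 1) * Complex.exp (2 * π * I * ((x : ℂ) + a * I)) ^ (n + 1) := by
    rw [exp_two_pi_I_mul_add_mul_I_pow, mul_assoc]
    push_cast
    rfl
  rw [hJ _ (by simpa using ha), exp_neg_two_pi_I_mul_add_mul_I,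
    Finset.sum_congr rfl fun n _ => hterm n, add_sub_add_left_eq_sub]
  calc _ ≤ Real.exp (2 * π * (2 * √M - a * M)) / (√2 * ((M : ℝ) + 1) ^ ((3 : ℝ) / 4)) *
          (Real.exp t - 1)⁻¹ :=
        norm_tsum_sub_sum_range_le ((Real.hasSum_exp_neg_pow_succ ht).mul_left _) M fun k => by
          rw [norm_mul, norm_pow, norm_exp_two_pi_I_mul_add_mul_I, Complex.norm_real,
            Real.norm_of_nonneg (by linarith [hc1 (k + M + 1) (by omega)])]
          exact coeff_mul_exp_pow_le hc2 a hM0 k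
    _ < Real.exp (2 * π * (2 * √M - a * M)) / (√2 * ((M : ℝ) + 1) ^ ((3 : ℝ) / 4)) * t⁻¹ := by
        gcongr
        linarith [Real.add_one_lt_exp ht.ne']
    _ = _ := by
        rw [two_mul_sqrt_sub_mul_eq ha.ne' (Nat.cast_nonneg M)]
        have : a * √M - 1 ≠ 0 := by linarith
        unfold t
        field_simp

/-- Approximation of the `j`-function by a short trigonometric polynomial.
Here `c : ℕ → ℝ` are the Fourier coefficients of `j` (with `c 0 = 744`), and
`J(τ) = q⁻¹ + 744 + ∑_{n ≥ 1} c(n) qⁿ`. -/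
theorem j_trig_poly_approx (c : ℕ → ℝ) (hc0 : c 0 = 744)
    (hc1 : ∀ n : ℕ, 1 ≤ n → 1 ≤ c n)
    (hc2 : ∀ n : ℕ, 1 ≤ n →
      c n ≤ Real.exp (4 * π * Real.sqrt n) / (Real.sqrt 2 * (n : ℝ) ^ ((3 : ℝ) / 4)))
    (J : ℂ → ℂ)
    (hJ : ∀ τ : ℂ, 0 < τ.im → J τ = Complex.exp (-(2 * π * I * τ)) + 744 +
      ∑' n : ℕ, (c (n + 1) : ℂ) * Complex.exp (2 * π * I * τ) ^ (n + 1))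
    (a : ℝ) (ha : 0 < a) (M : ℕ) (hM : 1 / a ^ 2 < (M : ℝ)) (x : ℝ) :
    ‖J ((x : ℂ) + a * I) -
        (Complex.exp (2 * π * a) * Complex.exp (-(2 * π * I * x)) + 744 +
          ∑ n ∈ Finset.range M, (c (n + 1) : ℂ) * Complex.exp (-(2 * π * a * (n + 1))) *
            Complex.exp (2 * π * I * (n + 1) * x))‖ <
      Real.exp (2 * π * (1 / a - a * (Real.sqrt M - 1 / a) ^ 2)) /
          (2 * Real.sqrt 2 * π * ((M : ℝ) + 1) ^ ((3 : ℝ) / 4)) *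
        (Real.sqrt M / (a * Real.sqrt M - 1)) :=
  j_trig_poly_approx_general c hc1 hc2 J hJ a ha M hM x
end
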